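/- Let k ≥ 2, n ≥ 1, u0 ≥ 0, and let σ, τ ∈ {0,1}^n be truth assignments agreeing on exactly z of the n variables; set α = z/n. Let c be a single random k-clause (a k-tuple of independent uniformly random literals over the n variables). Then for all γ, η ∈ (0,1): η^{−2u0} · E[ γ^{H(σ,c)+H(τ,c)} · η^{U(σ,c)+U(τ,c)} ] = f(α,γ,η). -/

import Mathlib

open Finset Filter Real

noncomputable section

/-- A `k`-clause over `n` variables: a `k`-tuple of literals. -/
abbrev Clause (n k : ℕ) := Fin k → Fin n × Bool

def clauseSat {n k : ℕ} (σ : Fin n → Bool) (c : Clause n k) : Prop :=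
  ∃ j : Fin k, σ (c j).1 = (c j).2

instance {n k : ℕ} (σ : Fin n → Bool) (c : Clause n k) :
    Decidable (clauseSat σ c) := by unfold clauseSat; infer_instance

/-- `H(σ,c)` for a single clause: satisfied minus unsatisfied literals. -/
def Hc {n k : ℕ} (σ : Fin n → Bool) (c : Clause n k) : ℤ :=
  ∑ j : Fin k, (if σ (c j).1 = (c j).2 then (1:ℤ) else -1)

/-- `U(σ,c)` for a single clause: `1` if `σ` satisfies no literal of `c`, else `0`. -/
def Uc {n k : ℕ} (σ : Fin n → Bool) (c : Clause n k) : ℕ :=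
  if clauseSat σ c then 0 else 1

def EV {β : Type*} [Fintype β] (X : β → ℝ) : ℝ := (∑ x : β, X x) / (Fintype.card β)

def ff (k : ℕ) (u0 α γ η : ℝ) : ℝ :=
  η ^ (-(2*u0)) *
    ((α * ((γ^2 + (γ^2)⁻¹)/2) + 1 - α)^k
      - 2*(1-η) * ((α * (γ^2)⁻¹ + (1-α))/2)^k
      + (1-η)^2 * (α * (γ^2)⁻¹/2)^k)


private lemma zpow_finset_sum' {x : ℝ} (hx : x ≠ 0) {ι : Type*} (s : Finset ι) (f : ι → ℤ) :
    x ^ (∑ i ∈ s, f i) = ∏ i ∈ s, x ^ f i := by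
  classical
  induction s using Finset.cons_induction with
  | empty => simp
  | cons a s ha ih => rw [Finset.sum_cons, Finset.prod_cons, zpow_add₀ hx, ih]

private lemma clause_sum_prod {n k : ℕ} (F : (Fin n × Bool) → ℝ) :
    ∑ c : Clause n k, ∏ j, F (c j) = (∑ l, F l) ^ k := by
  rw [Finset.sum_pow', Fintype.piFinset_univ]

private lemma eta_pow_Uc {n k : ℕ} (σ : Fin n → Bool) (η : ℝ) (c : Clause n k) :
    η ^ (Uc σ c) = 1 - (1-η) * ∏ j, (if σ (c j).1 = (c j).2 then (0:ℝ) else 1) := by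
  unfold Uc
  by_cases h : clauseSat σ c
  · obtain ⟨j, hj⟩ := h
    rw [if_pos ⟨j, hj⟩, Finset.prod_eq_zero (Finset.mem_univ j) (by rw [if_pos hj])]
    ring
  · rw [if_neg h, Finset.prod_eq_one, pow_one]
    · ring
    · intro j _
      rw [if_neg]
      exact fun hj => h ⟨j, hj⟩

private lemma sum_if_agree {n : ℕ} (σ τ : Fin n → Bool) (z : ℕ)
    (hz : (Finset.univ.filter fun i => σ i = τ i).card = z) (a b : ℝ) :
    ∑ i : Fin n, (if σ i = τ i then a else b) = z * a + ((n:ℝ) - z) * b := by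
  have hzn : z ≤ n := by
    rw [← hz]; simpa using Finset.card_filter_le Finset.univ (fun i => σ i = τ i)
  have hc2 : (Finset.univ.filter fun i => ¬ σ i = τ i).card = n - z := by
    have h := Finset.card_filter_add_card_filter_not (s := (Finset.univ : Finset (Fin n)))
      (p := fun i => σ i = τ i)
    simp only [hz, Finset.card_univ, Fintype.card_fin] at h
    omega
  rw [Finset.sum_ite, Finset.sum_const, Finset.sum_const, hz, hc2, nsmul_eq_mul, nsmul_eq_mul,
    Nat.cast_sub hzn]

/-- Eq. (24) of the paper: for truth assignments `σ, τ` agreeing on exactly `z`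
variables, with `α = z/n` and a single uniformly random `k`-clause `c`,
`η^{−2u₀} · E[γ^{H(σ,c)+H(τ,c)} η^{U(σ,c)+U(τ,c)}] = f(α,γ,η)`. -/
theorem single_clause_overlap (k n : ℕ) (hk : 2 ≤ k) (hn : 1 ≤ n)
    (u0 : ℝ) (hu0 : 0 ≤ u0) (σ τ : Fin n → Bool) (z : ℕ)
    (hz : (Finset.univ.filter fun i => σ i = τ i).card = z)
    (γ η : ℝ) (hγ0 : 0 < γ) (hγ1 : γ < 1) (hη0 : 0 < η) (hη1 : η < 1) :
    η ^ (-(2*u0)) * EV (fun c : Clause n k =>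
        γ ^ (((Hc σ c + Hc τ c : ℤ)) : ℝ) * η ^ (((Uc σ c + Uc τ c : ℕ)) : ℝ)) =
      ff k u0 ((z : ℝ)/(n : ℝ)) γ η := by
  classical
  have hγne : γ ≠ 0 := ne_of_gt hγ0
  have hn0 : (n:ℝ) ≠ 0 := by positivity
  have hzn : z ≤ n := by
    rw [← hz]; simpa using Finset.card_filter_le Finset.univ (fun i => σ i = τ i)
  set A : Fin n × Bool → ℝ :=
    fun l => γ ^ (((if σ l.1 = l.2 then (1:ℤ) else -1) + (if τ l.1 = l.2 then 1 else -1))) with hA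
  set uS : Fin n × Bool → ℝ := fun l => if σ l.1 = l.2 then (0:ℝ) else 1 with huS
  set uT : Fin n × Bool → ℝ := fun l => if τ l.1 = l.2 then (0:ℝ) else 1 with huT
  have hpoint : ∀ c : Clause n k,
      γ ^ (((Hc σ c + Hc τ c : ℤ)) : ℝ) * η ^ (((Uc σ c + Uc τ c : ℕ)) : ℝ)
        = (∏ j, A (c j)) - (1-η) * ∏ j, (A (c j) * uS (c j))
          - (1-η) * ∏ j, (A (c j) * uT (c j))
          + (1-η)^2 * ∏ j, (A (c j) * uS (c j) * uT (c j)) := by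
    intro c
    rw [Real.rpow_intCast, Real.rpow_natCast]
    have hH : γ ^ (Hc σ c + Hc τ c) = ∏ j, A (c j) := by
      unfold Hc
      rw [← Finset.sum_add_distrib, zpow_finset_sum' hγne]
    have hUS := eta_pow_Uc σ η c
    have hUT := eta_pow_Uc τ η c
    rw [pow_add, hH, hUS, hUT]
    simp only [Finset.prod_mul_distrib]
    ring
  have hsum : ∑ c : Clause n k, (γ ^ (((Hc σ c + Hc τ c : ℤ)) : ℝ) *
        η ^ (((Uc σ c + Uc τ c : ℕ)) : ℝ))
      = (∑ l, A l)^k - (1-η) * (∑ l, A l * uS l)^k - (1-η) * (∑ l, A l * uT l)^k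
        + (1-η)^2 * (∑ l, A l * uS l * uT l)^k := by
    rw [Finset.sum_congr rfl (fun c _ => hpoint c)]
    rw [Finset.sum_add_distrib, Finset.sum_sub_distrib, Finset.sum_sub_distrib,
      ← Finset.mul_sum, ← Finset.mul_sum, ← Finset.mul_sum,
      clause_sum_prod, clause_sum_prod (fun l => A l * uS l),
      clause_sum_prod (fun l => A l * uT l), clause_sum_prod (fun l => A l * uS l * uT l)]
  -- per-literal sums
  have h2 : γ ^ ((1:ℤ)+1) = γ^2 := by
    rw [show ((1:ℤ)+1) = ((2:ℕ):ℤ) by norm_num, zpow_natCast]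
  have hm2 : γ ^ ((-1:ℤ)+(-1)) = (γ^2)⁻¹ := by
    rw [show ((-1:ℤ)+(-1)) = -((2:ℕ):ℤ) by norm_num, zpow_neg, zpow_natCast]
  have hS1 : (∑ l, A l) = z * (γ^2 + (γ^2)⁻¹) + ((n:ℝ) - z) * 2 := by
    rw [Fintype.sum_prod_type]
    rw [show (∑ i : Fin n, ∑ b : Bool, A (i, b))
        = ∑ i : Fin n, (if σ i = τ i then γ^2 + (γ^2)⁻¹ else 2) from
      Finset.sum_congr rfl fun i _ => by
        cases hσi : σ i <;> cases hτi : τ i <;>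
          simp [hA, Fintype.sum_bool, hσi, hτi, h2, hm2, zpow_ofNat, inv_pow] <;>
          norm_num <;> ring]
    exact sum_if_agree σ τ z hz _ _
  have hS2 : (∑ l, A l * uS l) = z * (γ^2)⁻¹ + ((n:ℝ) - z) * 1 := by
    rw [Fintype.sum_prod_type]
    rw [show (∑ i : Fin n, ∑ b : Bool, A (i, b) * uS (i, b))
        = ∑ i : Fin n, (if σ i = τ i then (γ^2)⁻¹ else 1) from
      Finset.sum_congr rfl fun i _ => by
        cases hσi : σ i <;> cases hτi : τ i <;>
          simp [hA, huS, Fintype.sum_bool, hσi, hτi, hm2, zpow_ofNat, inv_pow]]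
    exact sum_if_agree σ τ z hz _ _
  have hS3 : (∑ l, A l * uT l) = z * (γ^2)⁻¹ + ((n:ℝ) - z) * 1 := by
    rw [Fintype.sum_prod_type]
    rw [show (∑ i : Fin n, ∑ b : Bool, A (i, b) * uT (i, b))
        = ∑ i : Fin n, (if σ i = τ i then (γ^2)⁻¹ else 1) from
      Finset.sum_congr rfl fun i _ => by
        cases hσi : σ i <;> cases hτi : τ i <;>
          simp [hA, huT, Fintype.sum_bool, hσi, hτi, hm2, zpow_ofNat, inv_pow]]
    exact sum_if_agree σ τ z hz _ _
  have hS4 : (∑ l, A l * uS l * uT l) = z * (γ^2)⁻¹ + ((n:ℝ) - z) * 0 := by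
    rw [Fintype.sum_prod_type]
    rw [show (∑ i : Fin n, ∑ b : Bool, A (i, b) * uS (i, b) * uT (i, b))
        = ∑ i : Fin n, (if σ i = τ i then (γ^2)⁻¹ else 0) from
      Finset.sum_congr rfl fun i _ => by
        cases hσi : σ i <;> cases hτi : τ i <;>
          simp [hA, huS, huT, Fintype.sum_bool, hσi, hτi, hm2, zpow_ofNat, inv_pow]]
    exact sum_if_agree σ τ z hz _ _
  have hcard : (Fintype.card (Clause n k) : ℝ) = ((n:ℝ) * 2)^k := by
    rw [Fintype.card_fun]
    push_cast
    simp [mul_comm]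
  unfold ff EV
  congr 1
  rw [hsum, hS1, hS2, hS3, hS4, hcard]
  set α : ℝ := (z:ℝ)/(n:ℝ)
  have hT1 : (z:ℝ) * (γ^2 + (γ^2)⁻¹) + ((n:ℝ) - z) * 2 = ((n:ℝ)*2) * (α * ((γ^2 + (γ^2)⁻¹)/2) + 1 - α) := by
    rw [show α = (z:ℝ)/(n:ℝ) from rfl]
    field_simp [α]
    ring
  have hT2 : (z:ℝ) * (γ^2)⁻¹ + ((n:ℝ) - z) * 1 = ((n:ℝ)*2) * ((α * (γ^2)⁻¹ + (1-α))/2) := by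
    rw [show α = (z:ℝ)/(n:ℝ) from rfl]
    field_simp [α]
  have hT4 : (z:ℝ) * (γ^2)⁻¹ + ((n:ℝ) - z) * 0 = ((n:ℝ)*2) * (α * (γ^2)⁻¹/2) := by
    rw [show α = (z:ℝ)/(n:ℝ) from rfl]
    field_simp [α]
    ring
  have hD : ((n:ℝ)*2)^k ≠ 0 := by positivity
  have e1 : ((z:ℝ) * (γ^2 + (γ^2)⁻¹) + ((n:ℝ) - z) * 2)^k
      = ((n:ℝ)*2)^k * (α * ((γ^2 + (γ^2)⁻¹)/2) + 1 - α)^k := by rw [hT1, mul_pow]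
  have e2 : ((z:ℝ) * (γ^2)⁻¹ + ((n:ℝ) - z) * 1)^k
      = ((n:ℝ)*2)^k * ((α * (γ^2)⁻¹ + (1-α))/2)^k := by rw [hT2, mul_pow]
  have e4 : ((z:ℝ) * (γ^2)⁻¹ + ((n:ℝ) - z) * 0)^k
      = ((n:ℝ)*2)^k * (α * (γ^2)⁻¹/2)^k := by rw [hT4, mul_pow]
  rw [e1, e2, e4, div_eq_iff hD]
  ring


end
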